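/- arXiv:1612.05460 — 4 statements merged into one kernel-verified Lean document; each statement's English description precedes it below -/
import Mathlib

section
/- Let X_i ⊂ {0,1}^{d_i}, X_j ⊂ {0,1}^{d_j} be finite nonempty sets, and A_i ∈ {0,1}^{K×d_i}, A_j ∈ {0,1}^{K×d_j} with A_i x ∈ {0,1}^K for all x ∈ X_i and A_j x ∈ {0,1}^K for all x ∈ X_j. Let θ_i ∈ ℝ^{d_i}, θ_j ∈ ℝ^{d_j}, and let x* ∈ argmin_{x ∈ X_i} ⟨θ_i, x⟩ with ν := A_i x*. Suppose Δ ∈ ℝ^K satisfies Δ(s) ≥ 0 when ν(s)=1 and Δ(s) ≤ 0 when ν(s)=0, and additionally x* ∈ argmin_{x ∈ X_i} ⟨θ_i + A_iᵀ Δ, x⟩. Then min_{x ∈ X_i} ⟨θ_i, x⟩ + min_{y ∈ X_j} ⟨θ_j, y⟩ ≤ min_{x ∈ X_i} ⟨θ_i + A_iᵀΔ, x⟩ + min_{y ∈ X_j} ⟨θ_j - A_jᵀΔ, y⟩. -/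
/-!
Let `y₀` minimise the shifted cost of factor `j`. Bounding each original minimum by the value at
`x*` resp. `y₀`, the claim reduces to `0 ≤ Δ ⬝ᵥ (Aᵢ x* - Aⱼ y₀)`, since the shifted minimum of
factor `i` is still attained at `x*`. Coordinatewise this holds because `Aⱼ y₀ ∈ [0, 1]` and the sign
of `Δ` follows the binary vector `Aᵢ x*`.
-/

open Matrix Finset

theorem dotProduct_sub_nonneg_of_sign_pattern {ι : Type*} [Fintype ι] {ν μ Δ : ι → ℝ}
    (hν : ∀ s, ν s = 0 ∨ ν s = 1) (hμ : ∀ s, μ s ∈ Set.Icc 0 1)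
    (hΔ : ∀ s, (ν s = 1 → 0 ≤ Δ s) ∧ (ν s = 0 → Δ s ≤ 0)) :
    0 ≤ Δ ⬝ᵥ (ν - μ) := by
  refine Finset.sum_nonneg fun s _ => ?_
  obtain ⟨hμ0, hμ1⟩ := hμ s
  rcases hν s with h | h
  · simpa [h] using mul_nonneg_of_nonpos_of_nonpos ((hΔ s).2 h) (neg_nonpos.mpr hμ0)
  · simpa [h] using mul_nonneg ((hΔ s).1 h) (sub_nonneg.mpr hμ1)

theorem transpose_mulVec_dotProduct {m n : Type*} [Fintype m] [Fintype n]
    (A : Matrix m n ℝ) (v : m → ℝ) (x : n → ℝ) : Aᵀ *ᵥ v ⬝ᵥ x = v ⬝ᵥ A *ᵥ x := by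
  rw [mulVec_transpose, dotProduct_mulVec]

open Matrix Finset in
theorem monotonicity_condition_general
    (di dj K : ℕ)
    (Xi : Finset (Fin di → ℝ)) (hXi : Xi.Nonempty)
    (Xj : Finset (Fin dj → ℝ)) (hXj : Xj.Nonempty)
    (Ai : Matrix (Fin K) (Fin di) ℝ) (Aj : Matrix (Fin K) (Fin dj) ℝ)
    (hAi : ∀ x ∈ Xi, ∀ s, Ai.mulVec x s = 0 ∨ Ai.mulVec x s = 1)
    (hAj : ∀ x ∈ Xj, ∀ s, Aj.mulVec x s = 0 ∨ Aj.mulVec x s = 1)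
    (θi : Fin di → ℝ) (θj : Fin dj → ℝ)
    (xstar : Fin di → ℝ) (hxstar : xstar ∈ Xi)
    (Δ : Fin K → ℝ)
    (hΔ : ∀ s, (Ai.mulVec xstar s = 1 → 0 ≤ Δ s) ∧ (Ai.mulVec xstar s = 0 → Δ s ≤ 0))
    (hxstarmin' : ∀ x ∈ Xi,
      dotProduct (θi + Ai.transpose.mulVec Δ) xstar ≤
        dotProduct (θi + Ai.transpose.mulVec Δ) x) :
    Xi.inf' hXi (fun x => dotProduct θi x) +
      Xj.inf' hXj (fun y => dotProduct θj y) ≤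
    Xi.inf' hXi (fun x => dotProduct (θi + Ai.transpose.mulVec Δ) x) +
      Xj.inf' hXj (fun y => dotProduct (θj - Aj.transpose.mulVec Δ) y) := by
  obtain ⟨y₀, hy₀, hy₀min⟩ := Xj.exists_mem_eq_inf' hXj (fun y => (θj - Ajᵀ *ᵥ Δ) ⬝ᵥ y)
  have hAjy₀ : ∀ s, (Aj *ᵥ y₀) s ∈ Set.Icc (0 : ℝ) 1 := fun s => by
    rcases hAj y₀ hy₀ s with h | h <;> simp [h]
  have hgain : 0 ≤ Δ ⬝ᵥ (Ai *ᵥ xstar - Aj *ᵥ y₀) :=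
    dotProduct_sub_nonneg_of_sign_pattern (hAi xstar hxstar) hAjy₀ hΔ
  rw [hy₀min]
  calc Xi.inf' hXi (fun x => θi ⬝ᵥ x) + Xj.inf' hXj (fun y => θj ⬝ᵥ y)
      ≤ θi ⬝ᵥ xstar + θj ⬝ᵥ y₀ := add_le_add (inf'_le _ hxstar) (inf'_le _ hy₀)
    _ ≤ θi ⬝ᵥ xstar + θj ⬝ᵥ y₀ + Δ ⬝ᵥ (Ai *ᵥ xstar - Aj *ᵥ y₀) := le_add_of_nonneg_right hgain
    _ = (θi + Aiᵀ *ᵥ Δ) ⬝ᵥ xstar + (θj - Ajᵀ *ᵥ Δ) ⬝ᵥ y₀ := by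
      simp only [add_dotProduct, sub_dotProduct, dotProduct_sub, transpose_mulVec_dotProduct]
      ring
    _ ≤ Xi.inf' hXi (fun x => (θi + Aiᵀ *ᵥ Δ) ⬝ᵥ x) + (θj - Ajᵀ *ᵥ Δ) ⬝ᵥ y₀ :=
      add_le_add_left (le_inf' _ _ hxstarmin') _

open Matrix Finset in
/-- Monotonicity condition (Lemma 1): an admissible message Δ sent from factor i
to factor j does not decrease the sum of the two factors' minima. -/
theorem monotonicity_condition
    (di dj K : ℕ)
    (Xi : Finset (Fin di → ℝ)) (hXi : Xi.Nonempty)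
    (Xj : Finset (Fin dj → ℝ)) (hXj : Xj.Nonempty)
    (hXibin : ∀ x ∈ Xi, ∀ t, x t = 0 ∨ x t = 1)
    (hXjbin : ∀ x ∈ Xj, ∀ t, x t = 0 ∨ x t = 1)
    (Ai : Matrix (Fin K) (Fin di) ℝ) (Aj : Matrix (Fin K) (Fin dj) ℝ)
    (hAi : ∀ x ∈ Xi, ∀ s, Ai.mulVec x s = 0 ∨ Ai.mulVec x s = 1)
    (hAj : ∀ x ∈ Xj, ∀ s, Aj.mulVec x s = 0 ∨ Aj.mulVec x s = 1)
    (θi : Fin di → ℝ) (θj : Fin dj → ℝ)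
    (xstar : Fin di → ℝ) (hxstar : xstar ∈ Xi)
    (hxstarmin : ∀ x ∈ Xi, dotProduct θi xstar ≤ dotProduct θi x)
    (Δ : Fin K → ℝ)
    (hΔ : ∀ s, (Ai.mulVec xstar s = 1 → 0 ≤ Δ s) ∧ (Ai.mulVec xstar s = 0 → Δ s ≤ 0))
    (hxstarmin' : ∀ x ∈ Xi,
      dotProduct (θi + Ai.transpose.mulVec Δ) xstar ≤
        dotProduct (θi + Ai.transpose.mulVec Δ) x) :
    Xi.inf' hXi (fun x => dotProduct θi x) +
      Xj.inf' hXj (fun y => dotProduct θj y) ≤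
    Xi.inf' hXi (fun x => dotProduct (θi + Ai.transpose.mulVec Δ) x) +
      Xj.inf' hXj (fun y => dotProduct (θj - Aj.transpose.mulVec Δ) y) :=
  monotonicity_condition_general di dj K Xi hXi Xj hXj Ai Aj hAi hAj θi θj xstar hxstar Δ hΔ
    hxstarmin'
end

section
/- Let X_i ⊂ {0,1}^{d_i} be finite nonempty, θ ∈ ℝ^{d_i}, and A ∈ {0,1}^{K×d_i} with A x ∈ {0,1}^K for all x ∈ X_i. Let x*, x** ∈ argmin_{x ∈ X_i} ⟨θ, x⟩. Suppose Δ ∈ ℝ^K satisfies, with ν* := A x*: Δ(s) ≥ 0 when ν*(s)=1, Δ(s) ≤ 0 when ν*(s)=0, and x* ∈ argmin_{x ∈ X_i} ⟨θ + AᵀΔ, x⟩. Then, with ν** := A x**, also Δ(s) ≥ 0 when ν**(s)=1, Δ(s) ≤ 0 when ν**(s)=0, and x** ∈ argmin_{x ∈ X_i} ⟨θ + AᵀΔ, x⟩. -/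
/-!
Write `ν* = A x*`, `ν** = A x**`. The sign condition on `Δ` says precisely that each term
`Δ s * ν*(s)` is maximal among `Δ s * 0` and `Δ s * 1`, so `⟨Δ, ν*⟩ ≥ ⟨Δ, ν⟩` for every
0/1-vector `ν`. On the other hand `⟨θ + AᵀΔ, x⟩ = ⟨θ, x⟩ + ⟨Δ, A x⟩`, and since `x*` and `x**`
tie for `θ` while `x*` is optimal for `θ + AᵀΔ`, we get `⟨Δ, ν*⟩ ≤ ⟨Δ, ν**⟩`. Hence the two
sums agree term by term, which transfers the sign condition to `ν**`, and the two reparametrized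
costs agree, which transfers optimality to `x**`.
-/

open Matrix

def SignCompatible {ι R : Type*} [Zero R] [One R] [Preorder R] (Δ ν : ι → R) : Prop :=
  ∀ s, (ν s = 1 → 0 ≤ Δ s) ∧ (ν s = 0 → Δ s ≤ 0)

section Scalar

variable {R : Type*} [MulZeroOneClass R] [Preorder R] {d v w : R}

theorem mul_le_mul_of_signCompatible (hv : v = 0 ∨ v = 1) (hw : w = 0 ∨ w = 1)
    (h₁ : v = 1 → 0 ≤ d) (h₀ : v = 0 → d ≤ 0) : d * w ≤ d * v := by
  rcases hv with rfl | rfl <;> rcases hw with rfl | rfl <;> simp_all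

theorem signCompatible_of_mul_eq (hv : v = 0 ∨ v = 1) (h₁ : v = 1 → 0 ≤ d)
    (h₀ : v = 0 → d ≤ 0) (heq : d * w = d * v) : (w = 1 → 0 ≤ d) ∧ (w = 0 → d ≤ 0) := by
  constructor <;> rintro rfl <;> rcases hv with rfl | rfl <;> simp_all

end Scalar

section DotProduct

variable {ι R : Type*} [Fintype ι] [CommRing R] [PartialOrder R] [IsOrderedRing R]
  {Δ ν ν' : ι → R}

theorem dotProduct_le_of_signCompatible (hΔ : SignCompatible Δ ν)
    (hν : ∀ s, ν s = 0 ∨ ν s = 1) (hν' : ∀ s, ν' s = 0 ∨ ν' s = 1) :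
    Δ ⬝ᵥ ν' ≤ Δ ⬝ᵥ ν :=
  Finset.sum_le_sum fun s _ ↦ mul_le_mul_of_signCompatible (hν s) (hν' s) (hΔ s).1 (hΔ s).2

theorem signCompatible_of_dotProduct_le (hΔ : SignCompatible Δ ν)
    (hν : ∀ s, ν s = 0 ∨ ν s = 1) (hν' : ∀ s, ν' s = 0 ∨ ν' s = 1)
    (hle : Δ ⬝ᵥ ν ≤ Δ ⬝ᵥ ν') : SignCompatible Δ ν' := by
  have hterm : ∀ s, Δ s * ν' s ≤ Δ s * ν s := fun s ↦
    mul_le_mul_of_signCompatible (hν s) (hν' s) (hΔ s).1 (hΔ s).2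
  have hsum : Δ ⬝ᵥ ν' = Δ ⬝ᵥ ν := le_antisymm (dotProduct_le_of_signCompatible hΔ hν hν') hle
  intro s
  refine signCompatible_of_mul_eq (hν s) (hΔ s).1 (hΔ s).2 ?_
  exact (Finset.sum_eq_sum_iff_of_le fun i _ ↦ hterm i).mp hsum s (Finset.mem_univ s)

end DotProduct

theorem add_transpose_mulVec_dotProduct {m n R : Type*} [Fintype m] [Fintype n] [CommSemiring R]
    (θ : n → R) (A : Matrix m n R) (Δ : m → R) (x : n → R) :
    (θ + Aᵀ *ᵥ Δ) ⬝ᵥ x = θ ⬝ᵥ x + Δ ⬝ᵥ (A *ᵥ x) := by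
  rw [add_dotProduct, mulVec_transpose, dotProduct_mulVec]

open Matrix in
theorem admissible_for_all_minima_general
    (di K : ℕ) (Xi : Finset (Fin di → ℝ))
    (A : Matrix (Fin K) (Fin di) ℝ)
    (hA : ∀ x ∈ Xi, ∀ s, A.mulVec x s = 0 ∨ A.mulVec x s = 1)
    (θ : Fin di → ℝ)
    (xstar xss : Fin di → ℝ) (hxstar : xstar ∈ Xi) (hxss : xss ∈ Xi)
    (hxstarmin : ∀ x ∈ Xi, dotProduct θ xstar ≤ dotProduct θ x)
    (hxssmin : ∀ x ∈ Xi, dotProduct θ xss ≤ dotProduct θ x)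
    (Δ : Fin K → ℝ)
    (hΔ : ∀ s, (A.mulVec xstar s = 1 → 0 ≤ Δ s) ∧ (A.mulVec xstar s = 0 → Δ s ≤ 0))
    (hxstarmin' : ∀ x ∈ Xi,
      dotProduct (θ + A.transpose.mulVec Δ) xstar ≤
        dotProduct (θ + A.transpose.mulVec Δ) x) :
    (∀ s, (A.mulVec xss s = 1 → 0 ≤ Δ s) ∧ (A.mulVec xss s = 0 → Δ s ≤ 0)) ∧
    (∀ x ∈ Xi,
      dotProduct (θ + A.transpose.mulVec Δ) xss ≤
        dotProduct (θ + A.transpose.mulVec Δ) x) := by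
  have htie : θ ⬝ᵥ xstar = θ ⬝ᵥ xss := le_antisymm (hxstarmin xss hxss) (hxssmin xstar hxstar)
  have hle : Δ ⬝ᵥ (A *ᵥ xstar) ≤ Δ ⬝ᵥ (A *ᵥ xss) := by
    have := hxstarmin' xss hxss
    rw [add_transpose_mulVec_dotProduct, add_transpose_mulVec_dotProduct, htie] at this
    exact le_of_add_le_add_left this
  have hcost : (θ + Aᵀ *ᵥ Δ) ⬝ᵥ xss = (θ + Aᵀ *ᵥ Δ) ⬝ᵥ xstar := by
    rw [add_transpose_mulVec_dotProduct, add_transpose_mulVec_dotProduct, htie,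
      le_antisymm (dotProduct_le_of_signCompatible hΔ (hA xstar hxstar) (hA xss hxss)) hle]
  exact ⟨signCompatible_of_dotProduct_le hΔ (hA xstar hxstar) (hA xss hxss) hle,
    fun x hx ↦ hcost ▸ hxstarmin' x hx⟩

open Matrix in
/-- Multiple-minima lemma: if Δ is admissible w.r.t. one minimizer x* of ⟨θ,·⟩
over X_i, it is admissible w.r.t. any other minimizer x** as well. -/
theorem admissible_for_all_minima
    (di K : ℕ) (Xi : Finset (Fin di → ℝ)) (hXi : Xi.Nonempty)
    (hXibin : ∀ x ∈ Xi, ∀ t, x t = 0 ∨ x t = 1)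
    (A : Matrix (Fin K) (Fin di) ℝ)
    (hA : ∀ x ∈ Xi, ∀ s, A.mulVec x s = 0 ∨ A.mulVec x s = 1)
    (θ : Fin di → ℝ)
    (xstar xss : Fin di → ℝ) (hxstar : xstar ∈ Xi) (hxss : xss ∈ Xi)
    (hxstarmin : ∀ x ∈ Xi, dotProduct θ xstar ≤ dotProduct θ x)
    (hxssmin : ∀ x ∈ Xi, dotProduct θ xss ≤ dotProduct θ x)
    (Δ : Fin K → ℝ)
    (hΔ : ∀ s, (A.mulVec xstar s = 1 → 0 ≤ Δ s) ∧ (A.mulVec xstar s = 0 → Δ s ≤ 0))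
    (hxstarmin' : ∀ x ∈ Xi,
      dotProduct (θ + A.transpose.mulVec Δ) xstar ≤
        dotProduct (θ + A.transpose.mulVec Δ) x) :
    (∀ s, (A.mulVec xss s = 1 → 0 ≤ Δ s) ∧ (A.mulVec xss s = 0 → Δ s ≤ 0)) ∧
    (∀ x ∈ Xi,
      dotProduct (θ + A.transpose.mulVec Δ) xss ≤
        dotProduct (θ + A.transpose.mulVec Δ) x) :=
  admissible_for_all_minima_general di K Xi A hA θ xstar xss hxstar hxss hxstarmin hxssmin Δ hΔ
    hxstarmin'
end

section
/- Let G = (V, E) be a finite undirected graph and x ∈ {0,1}^E satisfy the cycle inequality Σ_{e ∈ C \ {e'}} x(e) ≥ x(e') for every cycle C of G and every e' ∈ C. Then the relation u ~ v iff there exists a path from u to v using only edges e with x(e) = 0 is an equivalence relation on V, and for every edge uv ∈ E, x(uv) = 1 if and only if u and v are in different equivalence classes. -/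
/-!
If an edge `uv` had positive label while `u` and `v` were joined by a walk of `0`-edges,
shortening that walk to a path and closing it with `uv` would give a cycle whose inequality
at `uv` reads `x(uv) ≤ 0`.
-/

namespace SimpleGraph

variable {V : Type*} (G : SimpleGraph V)

theorem equivalence_exists_walk_forall_edges (P : Sym2 V → Prop) :
    Equivalence (fun u v : V => ∃ p : G.Walk u v, ∀ e ∈ p.edges, P e) where
  refl _ := ⟨.nil, by simp⟩
  symm := fun ⟨p, hp⟩ => ⟨p.reverse, by simpa using hp⟩
  trans := fun ⟨p, hp⟩ ⟨q, hq⟩ =>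
    ⟨p.append q, fun e he =>
      (List.mem_append.mp (Walk.edges_append p q ▸ he)).elim (hp e) (hq e)⟩

/-- Cycles are modelled as closed trails; `erase` removes the single occurrence of `e'`. -/
def SatisfiesCycleInequalities [DecidableEq V] {α : Type*} [AddMonoid α] [LE α]
    (x : Sym2 V → α) : Prop :=
  ∀ (u : V) (p : G.Walk u u), p.IsTrail →
    ∀ e' ∈ p.edges, x e' ≤ ((p.edges.erase e').map x).sum

variable {G} [DecidableEq V] {α : Type*} [AddMonoid α] [Preorder α] {x : Sym2 V → α}

theorem SatisfiesCycleInequalities.le_sum_of_isTrail (hcyc : G.SatisfiesCycleInequalities x)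
    {u v : V} (h : G.Adj u v) {q : G.Walk v u} (hq : q.IsTrail) (huv : s(u, v) ∉ q.edges) :
    x s(u, v) ≤ (q.edges.map x).sum := by
  simpa using hcyc u (.cons h q) ((Walk.isTrail_cons h q).mpr ⟨hq, huv⟩) s(u, v) (by simp)

theorem SatisfiesCycleInequalities.le_zero_of_walk (hcyc : G.SatisfiesCycleInequalities x)
    {u v : V} (h : G.Adj u v) (p : G.Walk u v) (hp : ∀ e ∈ p.edges, x e = 0) :
    x s(u, v) ≤ 0 := by
  set q := p.reverse.bypass
  have hq : ∀ e ∈ q.edges, x e = 0 := fun e he =>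
    hp e (by simpa using Walk.edges_bypass_subset_edges _ he)
  by_cases huv : s(u, v) ∈ q.edges
  · exact (hq _ huv).le
  · calc x s(u, v) ≤ (q.edges.map x).sum :=
          hcyc.le_sum_of_isTrail h p.reverse.bypass_isPath.isTrail huv
      _ = 0 := List.sum_eq_zero fun _ hxe => by
        obtain ⟨e, he, rfl⟩ := List.mem_map.mp hxe
        exact hq e he

end SimpleGraph

theorem cycle_inequalities_give_partition_general
    {V : Type*} [DecidableEq V]
    (G : SimpleGraph V)
    (x : Sym2 V → ℝ)
    (hxbin : ∀ e ∈ G.edgeSet, x e = 0 ∨ x e = 1)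
    (hcyc : ∀ (u : V) (p : G.Walk u u), p.IsTrail →
      ∀ e' ∈ p.edges, x e' ≤ ((p.edges.erase e').map x).sum) :
    Equivalence (fun u v : V => ∃ p : G.Walk u v, ∀ e ∈ p.edges, x e = 0) ∧
    ∀ u v : V, G.Adj u v →
      (x s(u, v) = 1 ↔ ¬ ∃ p : G.Walk u v, ∀ e ∈ p.edges, x e = 0) := by
  have hcyc : G.SatisfiesCycleInequalities x := hcyc
  refine ⟨G.equivalence_exists_walk_forall_edges _, fun u v h => ⟨?_, fun hno => ?_⟩⟩
  · rintro hx ⟨p, hp⟩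
    linarith [hcyc.le_zero_of_walk h p hp]
  · refine (hxbin _ h).resolve_left fun h0 => hno ⟨h.toWalk, ?_⟩
    simpa using h0

/-- Converse multicut feasibility: a binary edge labeling satisfying all cycle
inequalities is the cut indicator of the partition into connected components of
the uncut subgraph: reachability by uncut edges is an equivalence relation, and
an edge is labeled 1 iff its endpoints lie in different classes. -/
theorem cycle_inequalities_give_partition
    {V : Type*} [Fintype V] [DecidableEq V]
    (G : SimpleGraph V)
    (x : Sym2 V → ℝ)
    (hxbin : ∀ e ∈ G.edgeSet, x e = 0 ∨ x e = 1)
    (hcyc : ∀ (u : V) (p : G.Walk u u), p.IsTrail →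
      ∀ e' ∈ p.edges, x e' ≤ ((p.edges.erase e').map x).sum) :
    Equivalence (fun u v : V => ∃ p : G.Walk u v, ∀ e ∈ p.edges, x e = 0) ∧
    ∀ u v : V, G.Adj u v →
      (x s(u, v) = 1 ↔ ¬ ∃ p : G.Walk u v, ∀ e ∈ p.edges, x e = 0) :=
  cycle_inequalities_give_partition_general G x hxbin hcyc
end

section
/- Let X ⊂ {0,1}^n be finite nonempty, A ∈ {0,1}^{K×n} with Ax ∈ {0,1}^K for all x ∈ X, θ ∈ ℝ^n, and let x*, x** be both minimizers of ⟨θ, x⟩ over X. Suppose Δ ∈ ℝ^K has sign pattern matching ν* := A x* (nonneg on support, nonpos off support) and x* remains a minimizer of ⟨θ + AᵀΔ, x⟩ over X. Then ⟨Δ, A x*⟩ = ⟨Δ, A x**⟩. -/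
/-!
Since x* and x** both minimize ⟨θ, ·⟩, the optimality of x* for θ + AᵀΔ gives
⟨Δ, A x*⟩ ≤ ⟨Δ, A x**⟩. Conversely, Δ is nonnegative where A x* is 1 and nonpositive
where it is 0, so Δ_s (A x**)_s ≤ Δ_s (A x*)_s in every coordinate, as (A x**)_s ∈ [0, 1].
-/

open Matrix

theorem dotProduct_add_transpose_mulVec {R m k : Type*} [CommRing R] [Fintype m] [Fintype k]
    (θ : m → R) (A : Matrix k m R) (Δ : k → R) (x : m → R) :
    (θ + Aᵀ *ᵥ Δ) ⬝ᵥ x = θ ⬝ᵥ x + Δ ⬝ᵥ (A *ᵥ x) := by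
  rw [add_dotProduct, mulVec_transpose, ← dotProduct_mulVec]

section SignPattern

variable {R : Type*} [CommRing R] [PartialOrder R] [IsOrderedRing R]

theorem mul_le_mul_of_signPattern {d a b : R} (ha : a = 0 ∨ a = 1) (hb₀ : 0 ≤ b) (hb₁ : b ≤ 1)
    (hd₁ : a = 1 → 0 ≤ d) (hd₀ : a = 0 → d ≤ 0) : d * b ≤ d * a := by
  rcases ha with rfl | rfl
  · simpa only [mul_zero] using mul_nonpos_of_nonpos_of_nonneg (hd₀ rfl) hb₀
  · simpa only [mul_one] using mul_le_of_le_one_right (hd₁ rfl) hb₁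

theorem dotProduct_le_of_signPattern {k : Type*} [Fintype k] {Δ ν μ : k → R}
    (hν : ∀ s, ν s = 0 ∨ ν s = 1) (hμ : ∀ s, 0 ≤ μ s ∧ μ s ≤ 1)
    (hΔ : ∀ s, (ν s = 1 → 0 ≤ Δ s) ∧ (ν s = 0 → Δ s ≤ 0)) :
    Δ ⬝ᵥ μ ≤ Δ ⬝ᵥ ν :=
  Finset.sum_le_sum fun s _ =>
    mul_le_mul_of_signPattern (hν s) (hμ s).1 (hμ s).2 (hΔ s).1 (hΔ s).2

end SignPattern

open Matrix in
theorem admissible_update_equal_message_value_general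
    (n K : ℕ) (X : Finset (Fin n → ℝ))
    (A : Matrix (Fin K) (Fin n) ℝ)
    (hA : ∀ x ∈ X, ∀ s, A.mulVec x s = 0 ∨ A.mulVec x s = 1)
    (θ : Fin n → ℝ)
    (xstar xss : Fin n → ℝ) (hxstar : xstar ∈ X) (hxss : xss ∈ X)
    (hxstarmin : ∀ x ∈ X, dotProduct θ xstar ≤ dotProduct θ x)
    (hxssmin : ∀ x ∈ X, dotProduct θ xss ≤ dotProduct θ x)
    (Δ : Fin K → ℝ)
    (hΔ : ∀ s, (A.mulVec xstar s = 1 → 0 ≤ Δ s) ∧ (A.mulVec xstar s = 0 → Δ s ≤ 0))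
    (hxstarmin' : ∀ x ∈ X,
      dotProduct (θ + A.transpose.mulVec Δ) xstar ≤
        dotProduct (θ + A.transpose.mulVec Δ) x) :
    dotProduct Δ (A.mulVec xstar) = dotProduct Δ (A.mulVec xss) := by
  have hθ : θ ⬝ᵥ xstar = θ ⬝ᵥ xss := le_antisymm (hxstarmin _ hxss) (hxssmin _ hxstar)
  have hle : Δ ⬝ᵥ (A *ᵥ xstar) ≤ Δ ⬝ᵥ (A *ᵥ xss) := by
    have h := hxstarmin' _ hxss
    rw [dotProduct_add_transpose_mulVec, dotProduct_add_transpose_mulVec, hθ] at h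
    exact le_of_add_le_add_left h
  have hss_unit : ∀ s, 0 ≤ (A *ᵥ xss) s ∧ (A *ᵥ xss) s ≤ 1 := fun s => by
    rcases hA _ hxss s with h | h <;> rw [h] <;> norm_num
  exact le_antisymm hle (dotProduct_le_of_signPattern (hA _ hxstar) hss_unit hΔ)

open Matrix in
/-- Two minimizers of the original cost receive the same message value under an
admissible update Δ: ⟨Δ, A x*⟩ = ⟨Δ, A x**⟩. -/
theorem admissible_update_equal_message_value
    (n K : ℕ) (X : Finset (Fin n → ℝ)) (hX : X.Nonempty)
    (hXbin : ∀ x ∈ X, ∀ t, x t = 0 ∨ x t = 1)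
    (A : Matrix (Fin K) (Fin n) ℝ)
    (hA : ∀ x ∈ X, ∀ s, A.mulVec x s = 0 ∨ A.mulVec x s = 1)
    (θ : Fin n → ℝ)
    (xstar xss : Fin n → ℝ) (hxstar : xstar ∈ X) (hxss : xss ∈ X)
    (hxstarmin : ∀ x ∈ X, dotProduct θ xstar ≤ dotProduct θ x)
    (hxssmin : ∀ x ∈ X, dotProduct θ xss ≤ dotProduct θ x)
    (Δ : Fin K → ℝ)
    (hΔ : ∀ s, (A.mulVec xstar s = 1 → 0 ≤ Δ s) ∧ (A.mulVec xstar s = 0 → Δ s ≤ 0))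
    (hxstarmin' : ∀ x ∈ X,
      dotProduct (θ + A.transpose.mulVec Δ) xstar ≤
        dotProduct (θ + A.transpose.mulVec Δ) x) :
    dotProduct Δ (A.mulVec xstar) = dotProduct Δ (A.mulVec xss) :=
  admissible_update_equal_message_value_general n K X A hA θ xstar xss hxstar hxss hxstarmin hxssmin
    Δ hΔ hxstarmin'
end
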